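/- arXiv:2101.10482 — 4 statements merged into one kernel-verified Lean document; each statement's English description precedes it below -/
import Mathlib

section
/- Let a commutative square in Cat be given, with top-left vertex T, functors H : T ⥤ S and H' : T ⥤ S', and bottom cospan G : S ⥤ V, K : S' ⥤ V, such that the square is a pullback square (in the sense of CategoryTheory.IsPullback in the category Cat). If G is a discrete opfibration, then the opposite leg H' : T ⥤ S' is a discrete opfibration. -/
/-!
Functors out of the walking arrow classify arrows, so a pullback square in `Cat` is also a
pullback square on arrows, and (through identity arrows) on objects. Given `g : H' t ⟶ d`, the
unique `G`-lift of `K g` starting at `H t` and the arrow `g` itself therefore glue to a unique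
arrow of `T` starting at `t`.
-/

open CategoryTheory

/-- A functor `F : C ⥤ D` is a discrete opfibration if for every object `c` of `C` and
every morphism `g : F.obj c ⟶ d` in `D`, there is a unique pair of an object `c'` and a
morphism `f : c ⟶ c'` with `F.obj c' = d` and `F.map f ≫ eqToHom _ = g`. -/
def IsDiscreteOpfib {C : Type*} [Category C] {D : Type*} [Category D] (F : C ⥤ D) : Prop :=
  ∀ (c : C) ⦃d : D⦄ (g : F.obj c ⟶ d),
    ∃! p : (c' : C) × (c ⟶ c'), ∃ h : F.obj p.1 = d, F.map p.2 ≫ eqToHom h = g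

namespace CategoryTheory.Arrow

lemma mk_eq_mk_iff_comp_eqToHom {C : Type*} [Category C] {X Y Y' : C}
    (f : X ⟶ Y) (g : X ⟶ Y') : Arrow.mk f = Arrow.mk g ↔ ∃ h : Y = Y', f ≫ eqToHom h = g := by
  rw [Arrow.mk_eq_mk_iff]
  constructor
  · rintro ⟨-, hY, rfl⟩
    exact ⟨hY, by simp⟩
  · rintro ⟨rfl, rfl⟩
    exact ⟨rfl, rfl, by simp⟩

end CategoryTheory.Arrow

lemma isDiscreteOpfib_iff_existsUnique_arrow {C D : Type*} [Category C] [Category D]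
    (F : C ⥤ D) : IsDiscreteOpfib F ↔ ∀ (c : C) ⦃d : D⦄ (g : F.obj c ⟶ d),
      ∃! f : Arrow C, f.left = c ∧ F.mapArrow.obj f = Arrow.mk g := by
  refine forall_congr' fun c => forall_congr' fun d => forall_congr' fun g => ?_
  simp only [Functor.mapArrow_obj]
  constructor
  · rintro ⟨⟨c', f⟩, hf, huniq⟩
    refine ⟨Arrow.mk f, ⟨rfl, (Arrow.mk_eq_mk_iff_comp_eqToHom _ _).2 hf⟩, ?_⟩
    rintro ⟨l, r, f'⟩ ⟨rfl, hf'⟩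
    cases huniq ⟨r, f'⟩ ((Arrow.mk_eq_mk_iff_comp_eqToHom _ _).1 hf')
    rfl
  · rintro ⟨⟨l, c', f⟩, ⟨rfl, hf⟩, huniq⟩
    refine ⟨⟨c', f⟩, (Arrow.mk_eq_mk_iff_comp_eqToHom _ _).1 hf, ?_⟩
    rintro ⟨r, f'⟩ hf'
    cases huniq (Arrow.mk f') ⟨rfl, (Arrow.mk_eq_mk_iff_comp_eqToHom _ _).2 hf'⟩
    rfl

universe v u

namespace CategoryTheory.Cat

attribute [local instance] uliftCategory

abbrev walkingArrow : Cat.{v, u} := Cat.of (ULiftHom.{v} (ULift.{u} (Fin 2)))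

def homWalkingArrowEquiv (C : Cat.{v, u}) : (walkingArrow.{v, u} ⟶ C) ≃ Arrow C :=
  (Hom.equivFunctor _ _).trans <|
    (Equiv.mk (fun F => (ULift.upFunctor ⋙ ULiftHom.up) ⋙ F)
      (fun F => (ULiftHom.down ⋙ ULift.downFunctor) ⋙ F) (fun _ => rfl) (fun _ => rfl)).trans
    ComposableArrows.arrowEquiv

lemma homWalkingArrowEquiv_comp {C D : Cat.{v, u}} (L : walkingArrow.{v, u} ⟶ C) (F : C ⟶ D) :
    homWalkingArrowEquiv D (L ≫ F) = F.toFunctor.mapArrow.obj (homWalkingArrowEquiv C L) := rfl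

end CategoryTheory.Cat

namespace CategoryTheory.IsPullback

variable {T S S' V : Cat.{v, u}} {H : T ⟶ S} {H' : T ⟶ S'} {G : S ⟶ V} {K : S' ⟶ V}

lemma cat_arrow_ext (hpb : IsPullback H H' G K) {γ₁ γ₂ : Arrow T}
    (h : H.toFunctor.mapArrow.obj γ₁ = H.toFunctor.mapArrow.obj γ₂)
    (h' : H'.toFunctor.mapArrow.obj γ₁ = H'.toFunctor.mapArrow.obj γ₂) : γ₁ = γ₂ := by
  let e := Cat.homWalkingArrowEquiv
  apply (e T).symm.injective
  apply hpb.hom_ext <;> apply (e _).injective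
  · simpa only [e, Cat.homWalkingArrowEquiv_comp, Equiv.apply_symm_apply] using h
  · simpa only [e, Cat.homWalkingArrowEquiv_comp, Equiv.apply_symm_apply] using h'

lemma cat_exists_arrow (hpb : IsPullback H H' G K) (α : Arrow S) (β : Arrow S')
    (w : G.toFunctor.mapArrow.obj α = K.toFunctor.mapArrow.obj β) :
    ∃ γ : Arrow T, H.toFunctor.mapArrow.obj γ = α ∧ H'.toFunctor.mapArrow.obj γ = β := by
  let e := Cat.homWalkingArrowEquiv
  have hw : (e S).symm α ≫ G = (e S').symm β ≫ K := by
    apply (e V).injective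
    simpa only [e, Cat.homWalkingArrowEquiv_comp, Equiv.apply_symm_apply] using w
  refine ⟨e T (hpb.lift _ _ hw), ?_, ?_⟩
  · rw [← Cat.homWalkingArrowEquiv_comp, hpb.lift_fst, Equiv.apply_symm_apply]
  · rw [← Cat.homWalkingArrowEquiv_comp, hpb.lift_snd, Equiv.apply_symm_apply]

lemma cat_obj_ext (hpb : IsPullback H H' G K) {t₁ t₂ : T}
    (h : H.toFunctor.obj t₁ = H.toFunctor.obj t₂)
    (h' : H'.toFunctor.obj t₁ = H'.toFunctor.obj t₂) : t₁ = t₂ :=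
  congrArg Comma.left <| hpb.cat_arrow_ext (γ₁ := Arrow.mk (𝟙 t₁)) (γ₂ := Arrow.mk (𝟙 t₂))
    (by simpa using congrArg (fun s => Arrow.mk (𝟙 s)) h)
    (by simpa using congrArg (fun s => Arrow.mk (𝟙 s)) h')

end CategoryTheory.IsPullback

theorem discreteOpfib_of_isPullback {T S S' V : Cat}
    (H : T ⟶ S) (H' : T ⟶ S') (G : S ⟶ V) (K : S' ⟶ V)
    (hpb : IsPullback H H' G K) (hG : IsDiscreteOpfib G.toFunctor) :
    IsDiscreteOpfib H'.toFunctor := by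
  rw [isDiscreteOpfib_iff_existsUnique_arrow] at hG ⊢
  intro t d g
  have hw : H.toFunctor ⋙ G.toFunctor = H'.toFunctor ⋙ K.toFunctor :=
    congrArg Cat.Hom.toFunctor hpb.w
  obtain ⟨α, ⟨hα, hαg⟩, hα_uniq⟩ :=
    hG (H.toFunctor.obj t) (eqToHom (Functor.congr_obj hw t) ≫ K.toFunctor.map g)
  rw [Arrow.arrow_mk_eqToHom_comp] at hαg
  obtain ⟨γ, hγ, hγ'⟩ := hpb.cat_exists_arrow α (Arrow.mk g) hαg
  have hγt : γ.left = t :=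
    hpb.cat_obj_ext ((congrArg Comma.left hγ).trans hα) (congrArg Comma.left hγ')
  refine ⟨γ, ⟨hγt, hγ'⟩, ?_⟩
  rintro δ ⟨rfl, hδ'⟩
  have hδ : H.toFunctor.mapArrow.obj δ = α := by
    refine hα_uniq _ ⟨rfl, ?_⟩
    rw [Arrow.arrow_mk_eqToHom_comp]
    calc G.toFunctor.mapArrow.obj (H.toFunctor.mapArrow.obj δ)
        = K.toFunctor.mapArrow.obj (H'.toFunctor.mapArrow.obj δ) :=
          congrArg (fun F => F.mapArrow.obj δ) hw
      _ = _ := by rw [hδ']; rfl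
  exact hpb.cat_arrow_ext (hδ.trans hγ.symm) (hδ'.trans hγ'.symm)
end

section
/- Let G : S ⥤ V be a functor equipped with an asymmetric lens structure: a category Λ, a discrete opfibration F : Λ ⥤ V and a bijective-on-objects functor P : Λ ⥤ S such that P ⋙ G = F. Then for every object s of S and every morphism g : G(s) ⟶ v in V, there exist an object s' of S, a morphism γ : s ⟶ s' in S, and an equality h : G(s') = v such that G.map γ ≫ eqToHom h = g. In other words, the Put of the lens produces, for every change of state of the view starting at G(s), a change of state of S starting at s whose image under the Get is the given view change, so that the new states are again synchronised. -/
open CategoryTheory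

theorem lens_put_exists {S V Λ : Type*} [Category S] [Category V] [Category Λ]
    (G : S ⥤ V) (F : Λ ⥤ V) (P : Λ ⥤ S)
    (hF : IsDiscreteOpfib F) (hP : Function.Bijective P.obj) (hcomm : P ⋙ G = F) :
    ∀ (s : S) ⦃v : V⦄ (g : G.obj s ⟶ v),
      ∃ (s' : S) (γ : s ⟶ s') (h : G.obj s' = v), G.map γ ≫ eqToHom h = g := by
  subst hcomm
  intro s v g
  obtain ⟨l, rfl⟩ := hP.2 s
  obtain ⟨⟨l', f⟩, ⟨h, hf⟩, -⟩ := hF l g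
  exact ⟨P.obj l', P.map f, h, hf⟩
end

section
/- Let G : S ⥤ V and G' : S' ⥤ V be functors, and suppose G' carries an asymmetric lens structure: a category Λ', a discrete opfibration F' : Λ' ⥤ V and a bijective-on-objects functor P' : Λ' ⥤ S' with P' ⋙ G' = F'. Call objects s of S and s' of S' synchronised when G(s) = G'(s'). Then for every synchronised pair (s, s') and every morphism α : s ⟶ r in S, there exist an object r' of S', a morphism β : s' ⟶ r' in S', and an equality h' : G'(r') = G(r) such that G'.map β ≫ eqToHom h' = eqToHom (hsync : G'(s') = G(s)) ≫ G.map α. In particular the pair (r, r') is again synchronised: the Forward propagation of the cospan restores synchronisation. -/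
open CategoryTheory

/-- Forward propagation along a cospan of asymmetric lenses: given a lens structure on
`G' : S' ⥤ V`, a synchronised pair (`G.obj s = G'.obj s'`) and a transition `α : s ⟶ r`
in `S`, there is a transition `β : s' ⟶ r'` in `S'` whose `G'`-image is the `G`-image of
`α` (modulo the syncing equalities); in particular `r` and `r'` are again synchronised. -/
theorem forward_propagation {S S' V Λ' : Type*}
    [Category S] [Category S'] [Category V] [Category Λ']
    (G : S ⥤ V) (G' : S' ⥤ V) (F' : Λ' ⥤ V) (P' : Λ' ⥤ S')
    (hF' : IsDiscreteOpfib F') (hP' : Function.Bijective P'.obj)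
    (hcomm : P' ⋙ G' = F') :
    ∀ (s : S) (s' : S') (hsync : G.obj s = G'.obj s') ⦃r : S⦄ (α : s ⟶ r),
      ∃ (r' : S') (β : s' ⟶ r') (h' : G'.obj r' = G.obj r),
        G'.map β ≫ eqToHom h' = eqToHom hsync.symm ≫ G.map α := by
  intro s s' hsync r α
  obtain ⟨l, hl⟩ := hP'.2 s'
  have e1 : F'.obj l = G.obj s := by
    rw [← hcomm]; simp [hl, hsync]
  obtain ⟨⟨l', f⟩, ⟨h, hf⟩, -⟩ := hF' l (eqToHom e1 ≫ G.map α)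
  have h' : G'.obj (P'.obj l') = G.obj r := by
    have := Functor.congr_obj hcomm l'
    simp at this
    rw [this, h]
  refine ⟨P'.obj l', eqToHom hl.symm ≫ P'.map f, h', ?_⟩
  have hm := Functor.congr_hom hcomm f
  simp only [Functor.comp_map] at hm
  rw [Functor.map_comp, eqToHom_map, Category.assoc, hm]
  simp only [Category.assoc, eqToHom_trans]
  rw [eqToHom_trans_assoc, hf, eqToHom_trans_assoc]
end

section
/- Let G : S ⥤ V be a functor admitting an asymmetric lens structure, i.e. there exist a category Λ, a discrete opfibration F : Λ ⥤ V and a bijective-on-objects functor P : Λ ⥤ S such that P ⋙ G = F. Let K : S' ⥤ V be any functor, and let a commutative square in Cat with top-left vertex T and functors H : T ⥤ S, H' : T ⥤ S' over the cospan (G, K) be a pullback square (in the sense of CategoryTheory.IsPullback in Cat). Then H' : T ⥤ S' also admits an asymmetric lens structure: there exist a category Λ'', a discrete opfibration F'' : Λ'' ⥤ S' and a bijective-on-objects functor P'' : Λ'' ⥤ T such that P'' ⋙ H' = F''. -/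
open CategoryTheory

/-- An asymmetric lens structure on a functor `G : S ⥤ V` (in `Cat`): a category `Λ`,
a discrete opfibration `F : Λ ⥤ V` and a bijective-on-objects functor `P : Λ ⥤ S`
(the Put) such that `P ⋙ G = F`. -/
def HasLensStructure {S V : Cat} (G : S ⟶ V) : Prop :=
  ∃ (Λ : Cat) (F : Λ ⟶ V) (P : Λ ⟶ S),
    IsDiscreteOpfib F.toFunctor ∧ Function.Bijective P.toFunctor.obj ∧ P ≫ G = F

/-!
The pullback of the discrete opfibration `F : Λ ⥤ V` along `K`, computed as pairs with equal
images, is again a discrete opfibration, now over `S'`. The universal property of `T` gives a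
functor from it to `T` (using the Put `P` on the first factor), which is bijective on objects:
`P` is, and an object of a pullback in `Cat` is determined by its two images, as one sees by
testing against constant functors.
-/

section

variable {A : Type*} [Category A] {B : Type*} [Category B] {C : Type*} [Category C]

/-- Pairs of objects, and of morphisms, with equal images in `C`: the pullback of `F` and `K`
in `Cat`. -/
@[ext]
structure StrictPullback (F : A ⥤ C) (K : B ⥤ C) where
  left : A
  right : B
  w : F.obj left = K.obj right

namespace StrictPullback

variable {F : A ⥤ C} {K : B ⥤ C}

@[ext]
structure Hom (x y : StrictPullback F K) where
  left : x.left ⟶ y.left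
  right : x.right ⟶ y.right
  w : F.map left ≫ eqToHom y.w = eqToHom x.w ≫ K.map right

instance : Category (StrictPullback F K) where
  Hom := Hom
  id x := ⟨𝟙 x.left, 𝟙 x.right, by simp⟩
  comp f g := ⟨f.left ≫ g.left, f.right ≫ g.right, by
    rw [F.map_comp, Category.assoc, g.w, reassoc_of% f.w, K.map_comp]⟩
  id_comp f := Hom.ext (Category.id_comp _) (Category.id_comp _)
  comp_id f := Hom.ext (Category.comp_id _) (Category.comp_id _)
  assoc f g h := Hom.ext (Category.assoc _ _ _) (Category.assoc _ _ _)

variable (F K)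

def fst : StrictPullback F K ⥤ A where
  obj x := x.left
  map f := f.left

def snd : StrictPullback F K ⥤ B where
  obj x := x.right
  map f := f.right

theorem fst_comp_eq_snd_comp : fst F K ⋙ F = snd F K ⋙ K :=
  CategoryTheory.Functor.ext (fun x => x.w) fun _ _ f =>
    ((comp_eqToHom_iff _ _ _).mp f.w).trans (Category.assoc _ _ _)

end StrictPullback

theorem IsDiscreteOpfib.strictPullback_snd {F : A ⥤ C} (hF : IsDiscreteOpfib F) (K : B ⥤ C) :
    IsDiscreteOpfib (StrictPullback.snd F K) := by
  intro x b g
  obtain ⟨⟨a, f⟩, ⟨h, hf⟩, huniq⟩ := hF x.left (eqToHom x.w ≫ K.map g)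
  refine ⟨⟨⟨a, b, h⟩, ⟨f, g, hf⟩⟩, ⟨rfl, Category.comp_id g⟩, ?_⟩
  rintro ⟨⟨a', b', w'⟩, ⟨f', g', hw'⟩⟩ ⟨rfl, hg⟩
  obtain rfl : g' = g := (Category.comp_id g').symm.trans hg
  obtain ⟨rfl, hff'⟩ := Sigma.mk.inj_iff.mp (huniq ⟨a', f'⟩ ⟨w', hw'⟩)
  obtain rfl := eq_of_heq hff'
  rfl

end

namespace CategoryTheory.Cat

variable {T S S' V : Cat} {H : T ⟶ S} {H' : T ⟶ S'} {G : S ⟶ V} {K : S' ⟶ V}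

theorem obj_ext_of_isPullback (hpb : IsPullback H H' G K) {t₁ t₂ : T}
    (h : H.toFunctor.obj t₁ = H.toFunctor.obj t₂)
    (h' : H'.toFunctor.obj t₁ = H'.toFunctor.obj t₂) : t₁ = t₂ := by
  have hconst :
      Hom.ofFunctor ((Functor.const T).obj t₁) = Hom.ofFunctor ((Functor.const T).obj t₂) :=
    hpb.hom_ext (Cat.ext (Functor.ext fun _ => h)) (Cat.ext (Functor.ext fun _ => h'))
  exact congr($(hconst).toFunctor.obj t₁)

theorem bijective_of_isPullback (hpb : IsPullback H H' G K) {Λ : Type*} [Category Λ]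
    {P : Λ ⥤ S} (hP : Function.Bijective P.obj)
    (q : StrictPullback (P ⋙ G.toFunctor) K.toFunctor → T)
    (hq : ∀ x, H.toFunctor.obj (q x) = P.obj x.left)
    (hq' : ∀ x, H'.toFunctor.obj (q x) = x.right) :
    Function.Bijective q := by
  constructor
  · intro x y hxy
    ext
    · exact hP.injective (by rw [← hq, ← hq, hxy])
    · rw [← hq', ← hq', hxy]
  · intro t
    obtain ⟨a, ha⟩ := hP.surjective (H.toFunctor.obj t)
    have hw : G.toFunctor.obj (P.obj a) = K.toFunctor.obj (H'.toFunctor.obj t) :=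
      ha ▸ congr($(hpb.w).toFunctor.obj t)
    exact ⟨⟨a, H'.toFunctor.obj t, hw⟩,
      obj_ext_of_isPullback hpb ((hq _).trans ha) (hq' _)⟩

end CategoryTheory.Cat

theorem lens_pullback {T S S' V : Cat}
    (G : S ⟶ V) (K : S' ⟶ V) (H : T ⟶ S) (H' : T ⟶ S')
    (hG : HasLensStructure G) (hpb : IsPullback H H' G K) :
    HasLensStructure H' := by
  obtain ⟨Λ, F, P, hF, hP, rfl⟩ := hG
  let Q : Cat.of (StrictPullback (P ≫ G).toFunctor K.toFunctor) ⟶ T :=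
    hpb.lift (StrictPullback.fst _ _ ⋙ P.toFunctor).toCatHom (StrictPullback.snd _ _).toCatHom
      (Cat.ext (StrictPullback.fst_comp_eq_snd_comp _ _))
  have hQ : Q ≫ H = (StrictPullback.fst _ _ ⋙ P.toFunctor).toCatHom := hpb.lift_fst _ _ _
  have hQ' : Q ≫ H' = (StrictPullback.snd _ _).toCatHom := hpb.lift_snd _ _ _
  exact ⟨_, _, Q, hF.strictPullback_snd K.toFunctor,
    Cat.bijective_of_isPullback hpb hP Q.toFunctor.obj
      (fun x => congr($(hQ).toFunctor.obj x)) (fun x => congr($(hQ').toFunctor.obj x)),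
    hQ'⟩
end
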